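/- Let R be a noetherian hereditary commutative ring (every ideal of R is projective as an R-module). Then every R-algebra A satisfies the α-condition: with A° = {f ∈ A^* : f(I) = 0 for some two-sided ideal I of A with A/I finitely generated as an R-module}, for every R-module M the map M ⊗_R A° → Hom_R(A,M), m ⊗ f ↦ (a ↦ f(a)m), is injective. -/
import Mathlib

set_option maxHeartbeats 1000000
set_option synthInstance.maxHeartbeats 400000
set_option linter.unnecessarySimpa false

universe u v

open TensorProduct


theorem aux_retract {R : Type*} [CommRing R] {X Y : Type*}
    [AddCommGroup X] [Module R X] [AddCommGroup Y] [Module R Y]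
    (f : X →ₗ[R] Y) (hf : Function.Injective f)
    (hproj : Module.Projective R (Y ⧸ LinearMap.range f)) :
    ∃ r : Y →ₗ[R] X, r ∘ₗ f = LinearMap.id := by
  obtain ⟨h, hh⟩ := Module.projective_lifting_property (LinearMap.range f).mkQ LinearMap.id
    (Submodule.mkQ_surjective _)
  have hmem : ∀ y : Y, y - h ((LinearMap.range f).mkQ y) ∈ LinearMap.range f := by
    intro y
    rw [← Submodule.Quotient.mk_eq_zero]
    have h1 : (LinearMap.range f).mkQ (h ((LinearMap.range f).mkQ y))
        = (LinearMap.range f).mkQ y := DFunLike.congr_fun hh _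
    have h2 : Submodule.Quotient.mk (p := LinearMap.range f) (y - h ((LinearMap.range f).mkQ y))
        = (LinearMap.range f).mkQ y - (LinearMap.range f).mkQ (h ((LinearMap.range f).mkQ y)) :=
      Submodule.Quotient.mk_sub _
    rw [h2, h1, sub_self]
  let t : Y →ₗ[R] LinearMap.range f :=
    LinearMap.codRestrict (LinearMap.range f) (LinearMap.id - h ∘ₗ (LinearMap.range f).mkQ) hmem
  let e : X ≃ₗ[R] LinearMap.range f := LinearEquiv.ofInjective f hf
  refine ⟨e.symm.toLinearMap ∘ₗ t, ?_⟩
  ext x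
  have ht : t (f x) = e x := by
    apply Subtype.ext
    have hfx : (LinearMap.range f).mkQ (f x) = 0 := by
      simp [Submodule.Quotient.mk_eq_zero]
    simp [t, e, hfx, LinearEquiv.ofInjective_apply]
  simp only [LinearMap.comp_apply, LinearMap.id_apply, LinearEquiv.coe_coe, ht]
  exact e.symm_apply_apply x

theorem aux_lTensor_inj {R : Type*} [CommRing R] {X Y M : Type*}
    [AddCommGroup X] [Module R X] [AddCommGroup Y] [Module R Y]
    [AddCommGroup M] [Module R M]
    (f : X →ₗ[R] Y) (r : Y →ₗ[R] X) (hr : r ∘ₗ f = LinearMap.id) :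
    Function.Injective (LinearMap.lTensor M f) := by
  have : (LinearMap.lTensor M r) ∘ₗ (LinearMap.lTensor M f) = LinearMap.id := by
    rw [← LinearMap.lTensor_comp, hr, LinearMap.lTensor_id]
  intro a b hab
  have h2 := congrArg (LinearMap.lTensor M r) hab
  rwa [← LinearMap.comp_apply, ← LinearMap.comp_apply, this, LinearMap.id_apply,
    LinearMap.id_apply] at h2




/-- Over a ring where every ideal is projective, every module embedding into a
finite free module is projective. -/
theorem aux_proj {R : Type u} [CommRing R] (hher : ∀ I : Ideal R, Module.Projective R I) :
    ∀ (n : ℕ) (P : Type v) [AddCommGroup P] [Module R P] (f : P →ₗ[R] (Fin n → R)),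
      Function.Injective f → Module.Projective R P := by
  intro n
  induction n with
  | zero =>
    intro P _ _ f hf
    have hsurj : Function.Surjective f := fun y => ⟨0, Subsingleton.elim _ _⟩
    exact Module.Projective.of_equiv (LinearEquiv.ofBijective f ⟨hf, hsurj⟩).symm
  | succ n ih =>
    intro P _ _ f hf
    set g : P →ₗ[R] R := (LinearMap.proj (Fin.last n)) ∘ₗ f with hg
    haveI hI : Module.Projective R (LinearMap.range g) := hher (LinearMap.range g)
    obtain ⟨s, hs⟩ := Module.projective_lifting_property g.rangeRestrict LinearMap.id
      (LinearMap.surjective_rangeRestrict g)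
    haveI hker : Module.Projective R (LinearMap.ker g) := by
      refine ih (LinearMap.ker g)
        ((LinearMap.funLeft R R Fin.castSucc) ∘ₗ f ∘ₗ (LinearMap.ker g).subtype) ?_
      intro x y hxy
      apply Subtype.ext
      apply hf
      funext i
      refine Fin.lastCases ?_ ?_ i
      · have hx : f (x : P) (Fin.last n) = 0 := x.2
        have hy : f (y : P) (Fin.last n) = 0 := y.2
        rw [hx, hy]
      · intro j
        exact congrFun hxy j
    -- the equivalence P ≃ ker g × range g
    let φ : (LinearMap.ker g × LinearMap.range g) →ₗ[R] P :=
      LinearMap.coprod (LinearMap.ker g).subtype s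
    have hφ : Function.Bijective φ := by
      constructor
      · rintro ⟨k, i⟩ ⟨k', i'⟩ h
        simp only [φ, LinearMap.coprod_apply] at h
        have h2 : g.rangeRestrict ((k : P) + s i) = g.rangeRestrict ((k' : P) + s i') :=
          congrArg g.rangeRestrict h
        have hsk : ∀ (k0 : LinearMap.ker g), g.rangeRestrict (k0 : P) = 0 := by
          intro k0; apply Subtype.ext; simpa using k0.2
        have hsi : ∀ (i0 : LinearMap.range g), g.rangeRestrict (s i0) = i0 :=
          fun i0 => DFunLike.congr_fun hs i0
        rw [map_add, map_add, hsk k, hsk k', hsi, hsi, zero_add, zero_add] at h2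
        subst h2
        have : (k : P) = (k' : P) := by
          have := add_right_cancel h
          exact this
        exact Prod.ext (Subtype.ext this) rfl
      · intro x
        have hmem : x - s (g.rangeRestrict x) ∈ LinearMap.ker g := by
          have : g (s (g.rangeRestrict x)) = g x := by
            have := DFunLike.congr_fun hs (g.rangeRestrict x)
            have h2 := congrArg Subtype.val this
            simpa using h2
          simp [LinearMap.mem_ker, this]
        exact ⟨(⟨x - s (g.rangeRestrict x), hmem⟩, g.rangeRestrict x), by
          simp [φ]⟩
    exact Module.Projective.of_equiv (LinearEquiv.ofBijective φ hφ)

theorem aux_alpha_inj {R : Type u} [CommRing R] [IsNoetherianRing R]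
    (hher : ∀ I : Ideal R, Module.Projective R I)
    (Q : Type v) [AddCommGroup Q] [Module R Q] [Module.Finite R Q]
    (M : Type*) [AddCommGroup M] [Module R M] :
    Function.Injective ((dualTensorHom R Q M) ∘ₗ
      (TensorProduct.comm R M (Module.Dual R Q)).toLinearMap) := by
  obtain ⟨n, pr, hpr⟩ := Module.Finite.exists_fin' R Q
  set ρ : Module.Dual R (Fin n → R) →ₗ[R] Module.Dual R (LinearMap.ker pr) :=
    (LinearMap.ker pr).subtype.dualMap with hρ
  have hkerρ : LinearMap.ker ρ = LinearMap.range pr.dualMap := by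
    ext f
    constructor
    · intro hf
      have hle : LinearMap.ker pr ≤ LinearMap.ker f := by
        intro z hz
        have h0 : ρ f ⟨z, hz⟩ = 0 := by rw [LinearMap.mem_ker.1 hf]; rfl
        simpa [hρ] using h0
      refine ⟨((LinearMap.ker pr).liftQ f hle) ∘ₗ
        (pr.quotKerEquivOfSurjective hpr).symm.toLinearMap, ?_⟩
      apply LinearMap.ext
      intro v
      have he : (pr.quotKerEquivOfSurjective hpr).symm (pr v)
          = (Submodule.Quotient.mk v : (Fin n → R) ⧸ LinearMap.ker pr) := by
        rw [LinearEquiv.symm_apply_eq]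
        rfl
      simp [LinearMap.dualMap_apply, he]
    · rintro ⟨g, rfl⟩
      rw [LinearMap.mem_ker]
      ext z
      have : pr (z : (Fin n → R)) = 0 := z.2
      simp [hρ, LinearMap.dualMap_apply, this]
  haveI : Module.Finite R (LinearMap.ker pr) :=
    Module.Finite.iff_fg.2 (IsNoetherian.noetherian _)
  obtain ⟨m, q, hq⟩ := Module.Finite.exists_fin' R (LinearMap.ker pr)
  let θ : (Module.Dual R (Fin n → R) ⧸ LinearMap.range pr.dualMap) →ₗ[R] (Fin m → R) :=
    (LinearEquiv.piRing R R (Fin m) R).toLinearMap ∘ₗ q.dualMap ∘ₗ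
      (LinearMap.range ρ).subtype ∘ₗ (ρ.quotKerEquivRange).toLinearMap ∘ₗ
      (Submodule.quotEquivOfEq (LinearMap.range pr.dualMap) (LinearMap.ker ρ)
        hkerρ.symm).toLinearMap
  have hθ : Function.Injective θ := by
    simp only [θ, LinearMap.coe_comp, LinearEquiv.coe_coe]
    exact (LinearEquiv.piRing R R (Fin m) R).injective.comp <|
      (LinearMap.dualMap_injective_of_surjective hq).comp <|
      (Submodule.injective_subtype _).comp <|
      (ρ.quotKerEquivRange).injective.comp
      (Submodule.quotEquivOfEq _ _ hkerρ.symm).injective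
  haveI hcoker : Module.Projective R
      (Module.Dual R (Fin n → R) ⧸ LinearMap.range pr.dualMap) :=
    aux_proj hher m _ θ hθ
  obtain ⟨r, hr⟩ := aux_retract pr.dualMap
    (LinearMap.dualMap_injective_of_surjective hpr) hcoker
  have hlt : Function.Injective (LinearMap.lTensor M pr.dualMap) :=
    aux_lTensor_inj _ r hr
  set αQ := (dualTensorHom R Q M) ∘ₗ (TensorProduct.comm R M (Module.Dual R Q)).toLinearMap
    with hαQ
  set αF := (dualTensorHom R (Fin n → R) M) ∘ₗ
    (TensorProduct.comm R M (Module.Dual R (Fin n → R))).toLinearMap with hαF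
  have hdiag : (LinearMap.lcomp R M pr) ∘ₗ αQ = αF ∘ₗ LinearMap.lTensor M pr.dualMap := by
    apply TensorProduct.ext'
    intro mm g0
    apply LinearMap.ext
    intro v
    simp [hαQ, hαF, LinearMap.dualMap_apply, dualTensorHom_apply]
  have hαFinj : Function.Injective αF := by
    have h1 : Function.Injective (dualTensorHom R (Fin n → R) M) := by
      intro u v huv
      apply (dualTensorHomEquivOfBasis (N := M) (Pi.basisFun R (Fin n))).injective
      rw [dualTensorHomEquivOfBasis_apply, dualTensorHomEquivOfBasis_apply, huv]
    rw [hαF]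
    rw [LinearMap.coe_comp]
    exact h1.comp (TensorProduct.comm R M (Module.Dual R (Fin n → R))).injective
  have hcomp : Function.Injective ((LinearMap.lcomp R M pr) ∘ₗ αQ) := by
    rw [hdiag, LinearMap.coe_comp]
    exact hαFinj.comp hlt
  rw [LinearMap.coe_comp] at hcomp
  exact Function.Injective.of_comp hcomp

/-- For a pairing `β : V × W → R` and an `R`-module `M`, the canonical map
`α_M : M ⊗ W → Hom_R(V,M)`, `m ⊗ w ↦ (v ↦ ⟨v,w⟩ • m)`. -/
noncomputable def pairingAlpha (R : Type*) {V W : Type*} (M : Type*) [CommRing R]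
    [AddCommGroup V] [Module R V] [AddCommGroup W] [Module R W]
    [AddCommGroup M] [Module R M] (β : V →ₗ[R] W →ₗ[R] R) :
    M ⊗[R] W →ₗ[R] (V →ₗ[R] M) :=
  (dualTensorHom R V M) ∘ₗ (TensorProduct.comm R M (Module.Dual R V)).toLinearMap ∘ₗ
    (TensorProduct.map LinearMap.id β.flip)

theorem pairingAlpha_tmul {R V W M : Type*} [CommRing R]
    [AddCommGroup V] [Module R V] [AddCommGroup W] [Module R W]
    [AddCommGroup M] [Module R M] (β : V →ₗ[R] W →ₗ[R] R) (m : M) (w : W) (v : V) :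
    pairingAlpha R M β (m ⊗ₜ[R] w) v = β v w • m := by
  simp [pairingAlpha, dualTensorHom_apply]


theorem pairingAlpha_injective_of_ker {R V W M : Type*} [CommRing R]
    [AddCommGroup V] [Module R V] [AddCommGroup W] [Module R W]
    [AddCommGroup M] [Module R M] (β : V →ₗ[R] W →ₗ[R] R)
    (h : ∀ x, pairingAlpha R M β x = 0 → x = 0) :
    Function.Injective (pairingAlpha R M β) := by
  intro u v huv
  have h0 : pairingAlpha R M β (u - v) = 0 := by rw [map_sub, huv, sub_self]
  have := h _ h0
  rwa [sub_eq_zero] at this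

theorem every_algebra_satisfies_alphaCondition_of_hereditary_noetherian
    {R A : Type*} [CommRing R] [Nontrivial R]
    -- `R` is noetherian and hereditary
    [IsNoetherianRing R] (hher : ∀ I : Ideal R, Module.Projective R I)
    [Ring A] [Algebra R A]
    -- `C` is the `R`-submodule `A° = {f ∈ A^* : f(I) = 0` for some `R`-cofinite
    -- two-sided ideal `I` of `A}` of `A^*`
    (C : Submodule R (Module.Dual R A))
    (hC : (C : Set (Module.Dual R A)) =
      {f : Module.Dual R A | ∃ I : Ideal A, (∀ x ∈ I, ∀ a : A, x * a ∈ I) ∧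
        Module.Finite R (A ⧸ I) ∧ ∀ x ∈ I, f x = 0}) :
    -- then the pairing `(A, A°)` satisfies the `α`-condition
    ∀ (M : Type*) [AddCommGroup M] [Module R M],
      Function.Injective
        (pairingAlpha (V := A) (W := ↥C) R M
          (LinearMap.flip (Submodule.subtype C))) := by
  intro M _ _
  have key : ∀ x, (pairingAlpha (V := A) (W := ↥C) R M
      (LinearMap.flip (Submodule.subtype C))) x = 0 → x = 0 := by
    intro x hx
    obtain ⟨T, rfl⟩ := TensorProduct.exists_finset x
    classical
    have hmemC : ∀ p : M × ↥C, ∃ I : Ideal A, (∀ y ∈ I, ∀ a : A, y * a ∈ I) ∧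
        Module.Finite R (A ⧸ I) ∧ ∀ y ∈ I, (p.2 : Module.Dual R A) y = 0 := by
      intro p
      have h2 := p.2.2
      rw [← SetLike.mem_coe, hC] at h2
      exact h2
    choose I hItwo hIfin hIvan using hmemC
    set Iinf : Ideal A := ⨅ p ∈ T, I p with hIinf
    set J : Submodule R A := Iinf.restrictScalars R with hJ
    have hmemJ : ∀ a : A, a ∈ J ↔ ∀ p ∈ T, a ∈ I p := by
      intro a
      rw [hJ, Submodule.restrictScalars_mem, hIinf]
      simp [Submodule.mem_iInf]
    -- finiteness of A ⧸ J
    haveI hfinpi : ∀ p : T, Module.Finite R (A ⧸ I p.1) := fun p => hIfin p.1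
    let Ψ : A →ₗ[R] (∀ p : T, A ⧸ I p.1) :=
      LinearMap.pi fun p => ((I p.1).mkQ).restrictScalars R
    have hkerΨ : LinearMap.ker Ψ = J := by
      ext a
      rw [LinearMap.mem_ker, hmemJ]
      simp only [Ψ, LinearMap.pi_apply, funext_iff, Pi.zero_apply, LinearMap.restrictScalars_apply,
        Submodule.mkQ_apply, Submodule.Quotient.mk_eq_zero]
      exact ⟨fun h p hp => h ⟨p, hp⟩, fun h p => h p.1 p.2⟩
    haveI hfinQ : Module.Finite R (A ⧸ J) := by
      haveI : IsNoetherian R (∀ p : T, A ⧸ I p.1) := inferInstance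
      haveI : Module.Finite R (LinearMap.range Ψ) :=
        Module.Finite.iff_fg.2 (IsNoetherian.noetherian _)
      exact Module.Finite.equiv
        (((Submodule.quotEquivOfEq J (LinearMap.ker Ψ) hkerΨ.symm).trans
          Ψ.quotKerEquivRange).symm)
    haveI hfinI : Module.Finite R (A ⧸ Iinf) :=
      Module.Finite.equiv (Submodule.Quotient.restrictScalarsEquiv R Iinf)
    -- the lift of functionals
    have hvan : ∀ p ∈ T, J ≤ LinearMap.ker (p.2 : Module.Dual R A) := by
      intro p hp a ha
      exact LinearMap.mem_ker.2 (hIvan p a ((hmemJ a).1 ha p hp))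
    let g : (p : M × ↥C) → p ∈ T → Module.Dual R (A ⧸ J) :=
      fun p hp => J.liftQ (p.2 : Module.Dual R A) (hvan p hp)
    have hΦmem : ∀ g0 : Module.Dual R (A ⧸ J), (J.mkQ).dualMap g0 ∈ C := by
      intro g0
      rw [← SetLike.mem_coe, hC]
      refine ⟨Iinf, ?_, hfinI, ?_⟩
      · intro y hy a
        have h1 : ∀ p ∈ T, y ∈ I p := by simpa [hIinf, Submodule.mem_iInf] using hy
        have h2 : ∀ p ∈ T, y * a ∈ I p := fun p hp => hItwo p y (h1 p hp) a
        simpa [hIinf, Submodule.mem_iInf] using h2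
      · intro y hy
        have hyJ : y ∈ J := by rw [hJ, Submodule.restrictScalars_mem]; exact hy
        have : J.mkQ y = 0 := by simpa [Submodule.Quotient.mk_eq_zero] using hyJ
        simp [LinearMap.dualMap_apply, this]
    let Φ : Module.Dual R (A ⧸ J) →ₗ[R] ↥C :=
      LinearMap.codRestrict C ((J.mkQ).dualMap) hΦmem
    have hΦg : ∀ (p : M × ↥C) (hp : p ∈ T), Φ (g p hp) = p.2 := by
      intro p hp
      apply Subtype.ext
      show (J.mkQ).dualMap (g p hp) = (p.2 : Module.Dual R A)
      apply LinearMap.ext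
      intro a
      simp [g, LinearMap.dualMap_apply, Submodule.liftQ_apply]
    set y : M ⊗[R] Module.Dual R (A ⧸ J) :=
      ∑ p ∈ T.attach, p.1.1 ⊗ₜ[R] g p.1 p.2 with hy
    have hxy : (LinearMap.lTensor M Φ) y = ∑ p ∈ T, p.1 ⊗ₜ[R] p.2 := by
      rw [hy, map_sum]
      rw [← Finset.sum_attach T (fun p => p.1 ⊗ₜ[R] (p.2 : ↥C))]
      refine Finset.sum_congr rfl ?_
      intro p _
      rw [LinearMap.lTensor_tmul, hΦg p.1 p.2]
    -- α for Q kills y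
    set αQ := (dualTensorHom R (A ⧸ J) M) ∘ₗ
      (TensorProduct.comm R M (Module.Dual R (A ⧸ J))).toLinearMap with hαQ
    have hαQy : αQ y = 0 := by
      apply LinearMap.ext
      intro qq
      obtain ⟨a, rfl⟩ := J.mkQ_surjective qq
      have h0 := DFunLike.congr_fun hx a
      simp only [map_sum, LinearMap.coe_sum, Finset.sum_apply, pairingAlpha_tmul,
        LinearMap.flip_apply, Submodule.coe_subtype] at h0
      rw [hy, map_sum]
      simp only [LinearMap.coe_sum, Finset.sum_apply, hαQ, LinearMap.comp_apply,
        LinearEquiv.coe_coe, TensorProduct.comm_tmul, dualTensorHom_apply,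
        LinearMap.zero_apply]
      have hterm : ∀ p ∈ T.attach, (g p.1 p.2) (J.mkQ a) • (p.1).1
          = ((p.1).2 : Module.Dual R A) a • (p.1).1 := by
        intro p _
        simp [g, Submodule.liftQ_apply]
      rw [Finset.sum_congr rfl hterm,
        Finset.sum_attach T (fun p => ((p.2 : Module.Dual R A) a) • p.1)]
      exact h0
    have hinj := aux_alpha_inj hher (A ⧸ J) M
    have hy0 : y = 0 := by
      apply hinj
      rw [hαQ] at hαQy
      simpa using hαQy
    rw [← hxy, hy0, map_zero]
  exact pairingAlpha_injective_of_ker _ key
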